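/- arXiv:1902.01525 — 3 statements merged into one kernel-verified Lean document; each statement's English description precedes it below -/
import Mathlib

section
/- Let (S, Σ) be a measurable space, {μ_n} a sequence of finite measures on S, and {f_n} a sequence of measurable extended-real-valued functions on S. Then there exists N ∈ ℕ such that the tail sequence {f_n}_{n≥N} is uniformly integrable with respect to {μ_n}_{n≥N} if and only if {f_n}_{n≥1} is asymptotically uniformly integrable with respect to {μ_n}_{n≥1}. -/
open MeasureTheory Filter Metric Topology
open scoped ENNReal

/-! One direction is `limsup_n a_n ≤ sup_{n ≥ N} a_n`. Conversely, asymptotic uniform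
integrability makes the tail integrals of all `f_n`, `n ≥ N`, finite at some level `K₀`; each of
them then tends to `0` as `K → ∞` by dominated convergence. Given `ε`, the `limsup` bound and
monotonicity in `K` handle all `n ≥ M`, and the finitely many `N ≤ n < M` are handled one by
one. -/

/-- The integral `∫_S |f(s)| 1{|f(s)| ≥ K} μ(ds)` (as a value in `ℝ≥0∞`). -/
noncomputable def tailIntegral {S : Type*} [MeasurableSpace S]
    (μ : Measure S) (f : S → EReal) (K : ℝ) : ℝ≥0∞ :=
  ∫⁻ s in {s | (K : EReal) ≤ (f s).abs}, (f s).abs ∂μ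

/-- `{f_n}` is asymptotically uniformly integrable w.r.t. `{μ_n}`:
`lim_{K→∞} limsup_n ∫ |f_n| 1{|f_n| ≥ K} dμ_n = 0`. -/
def AUI {S : Type*} [MeasurableSpace S] (μ : ℕ → Measure S) (f : ℕ → S → EReal) : Prop :=
  Tendsto (fun K : ℝ => limsup (fun n => tailIntegral (μ n) (f n) K) atTop) atTop (𝓝 0)

/-- The tail sequence `{f_n}_{n ≥ N}` is uniformly integrable w.r.t. `{μ_n}_{n ≥ N}`:
`lim_{K→∞} sup_{n ≥ N} ∫ |f_n| 1{|f_n| ≥ K} dμ_n = 0`. -/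
def UIFrom {S : Type*} [MeasurableSpace S] (μ : ℕ → Measure S) (f : ℕ → S → EReal)
    (N : ℕ) : Prop :=
  Tendsto (fun K : ℝ => ⨆ (n : ℕ) (_ : N ≤ n), tailIntegral (μ n) (f n) K) atTop (𝓝 0)

lemma EReal.measurable_abs : Measurable EReal.abs :=
  EReal.measurable_of_measurable_real (by
    simpa [EReal.abs_def] using measurable_id.abs.ennreal_ofReal)

section TailIntegral

variable {S : Type*} [MeasurableSpace S] (μ : Measure S) {f : S → EReal}

lemma measurableSet_le_abs (hf : Measurable f) (K : ℝ) :
    MeasurableSet {s | (K : EReal) ≤ (f s).abs} :=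
  measurableSet_le measurable_const
    (measurable_coe_ennreal_ereal.comp (EReal.measurable_abs.comp hf))

lemma tailIntegral_antitone (f : S → EReal) : Antitone (tailIntegral μ f) :=
  fun _ _ hKK' => lintegral_mono_set fun _ hs => (EReal.coe_le_coe_iff.mpr hKK').trans hs

lemma ENNReal.eventually_coe_ereal_lt_atTop {x : ℝ≥0∞} (hx : x ≠ ∞) :
    ∀ᶠ K : ℝ in atTop, (x : EReal) < K := by
  filter_upwards [eventually_gt_atTop x.toReal] with K hK
  rw [← EReal.coe_ennreal_toReal hx]
  exact_mod_cast hK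

/-- The tail integrand at level `K₀` dominates; where it is finite, so is `|f|`, and then the
integrand at level `K` vanishes for large `K`. -/
lemma tendsto_tailIntegral_atTop_zero (hf : Measurable f) {K₀ : ℝ}
    (hK₀ : tailIntegral μ f K₀ ≠ ∞) : Tendsto (tailIntegral μ f) atTop (𝓝 0) := by
  set A : ℝ → Set S := fun K => {s | (K : EReal) ≤ (f s).abs}
  have h_eq : tailIntegral μ f = fun K => ∫⁻ s, (A K).indicator (fun s => (f s).abs) s ∂μ :=
    funext fun K => (lintegral_indicator (measurableSet_le_abs hf K) _).symm
  rw [h_eq] at hK₀ ⊢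
  have h_meas (K : ℝ) : Measurable ((A K).indicator fun s => (f s).abs) :=
    (EReal.measurable_abs.comp hf).indicator (measurableSet_le_abs hf K)
  rw [← lintegral_zero (μ := μ)]
  refine tendsto_lintegral_filter_of_dominated_convergence (l := atTop) _
    (.of_forall h_meas) ?_ hK₀ ?_
  · filter_upwards [eventually_ge_atTop K₀] with K hK
    exact .of_forall <| Set.indicator_le_indicator_of_subset
      (fun _ hs => (EReal.coe_le_coe_iff.mpr hK).trans hs) fun _ => bot_le
  · filter_upwards [ae_lt_top (h_meas K₀) hK₀] with s hs
    have h_abs : (f s).abs ≠ ∞ := fun h_top =>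
      hs.ne ((Set.indicator_of_mem (show s ∈ A K₀ by simp [A, h_top]) _).trans h_top)
    refine tendsto_const_nhds.congr' ?_
    filter_upwards [ENNReal.eventually_coe_ereal_lt_atTop h_abs] with K hK
    exact (Set.indicator_of_notMem (s := A K) (not_le.mpr hK) _).symm

end TailIntegral

lemma ENNReal.tendsto_iSup_ge_of_tendsto_limsup {ι : Type*} [SemilatticeSup ι] [Nonempty ι]
    {F : ℕ → ι → ℝ≥0∞} {N : ℕ} (hF_anti : ∀ n, Antitone (F n)) (hF : ∀ n ≥ N, Tendsto (F n) atTop (𝓝 0))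
    (h : Tendsto (fun K => limsup (F · K) atTop) atTop (𝓝 0)) :
    Tendsto (fun K => ⨆ n ≥ N, F n K) atTop (𝓝 0) := by
  simp only [ENNReal.tendsto_nhds_zero] at hF ⊢
  intro ε hε
  obtain ⟨K₁, hK₁⟩ := (h.eventually (gt_mem_nhds hε)).exists
  obtain ⟨M, hM⟩ := (eventually_lt_of_limsup_lt hK₁).exists_forall_of_atTop
  have h_init : ∀ᶠ K in atTop, ∀ n ∈ Finset.Ico N M, F n K ≤ ε :=
    (eventually_all_finset _).mpr fun n hn => hF n (Finset.mem_Ico.mp hn).1 ε hε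
  filter_upwards [h_init, eventually_ge_atTop K₁] with K hK hK₁K
  refine iSup₂_le fun n hNn => ?_
  rcases lt_or_ge n M with hnM | hMn
  · exact hK n (Finset.mem_Ico.mpr ⟨hNn, hnM⟩)
  · exact (hF_anti n hK₁K).trans (hM n hMn).le

theorem tail_uniform_integrable_iff_aui_general {S : Type*} [MeasurableSpace S]
    (μ : ℕ → Measure S)
    (f : ℕ → S → EReal) (hf : ∀ n, Measurable (f n)) :
    (∃ N : ℕ, UIFrom μ f N) ↔ AUI μ f := by
  constructor
  · rintro ⟨N, hN⟩
    exact tendsto_of_tendsto_of_tendsto_of_le_of_le tendsto_const_nhds hN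
      (fun _ => bot_le) fun _ => limsup_eq_iInf_iSup_of_nat.le.trans (iInf_le _ N)
  · intro h
    obtain ⟨K₀, hK₀⟩ := (h.eventually (gt_mem_nhds one_pos)).exists
    obtain ⟨N, hN⟩ := (eventually_lt_of_limsup_lt hK₀).exists_forall_of_atTop
    exact ⟨N, ENNReal.tendsto_iSup_ge_of_tendsto_limsup
      (fun n => tailIntegral_antitone (μ n) (f n))
      (fun n hn => tendsto_tailIntegral_atTop_zero (μ n) (hf n) (hN n hn).ne_top) h⟩

/-- Equivalence of uniform integrability of a tail and asymptotic uniform integrability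
(Feinberg, Kasyanov, Liang; Theorem 2.2 of FKL18). -/
theorem tail_uniform_integrable_iff_aui {S : Type*} [MeasurableSpace S]
    (μ : ℕ → Measure S) (hμ : ∀ n, IsFiniteMeasure (μ n))
    (f : ℕ → S → EReal) (hf : ∀ n, Measurable (f n)) :
    (∃ N : ℕ, UIFrom μ f N) ↔ AUI μ f :=
  tail_uniform_integrable_iff_aui_general μ f hf
end

section
/- Let S be a metric space, {μ_n} a sequence of measures on the Borel σ-field of S converging weakly to a finite measure μ, and {f_n} a sequence of measurable extended-real-valued functions on S. Suppose there exists a sequence of measurable real-valued functions {g_n} on S with f_n(s) ≥ g_n(s) for all n and all s ∈ S such that −∞ < ∫_S limsup_{n→∞, s'→s} g_n(s') μ(ds) ≤ liminf_{n→∞} ∫_S g_n(s) μ_n(ds). Then ∫_S liminf_{n→∞, s'→s} f_n(s') μ(ds) ≤ liminf_{n→∞} ∫_S f_n(s) μ_n(ds), provided all integrals appearing are defined. -/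
open MeasureTheory Filter Metric Topology
open scoped ENNReal

/-- The positive part of an extended real, as a value in `ℝ≥0∞`. -/
noncomputable def EReal.posENN (x : EReal) : ℝ≥0∞ := (max x 0).abs

/-- The negative part of an extended real, as a value in `ℝ≥0∞`. -/
noncomputable def EReal.negENN (x : EReal) : ℝ≥0∞ := (max (-x) 0).abs

/-- The integral of an extended-real-valued function: `∫ f⁺ dμ − ∫ f⁻ dμ` (in `EReal`). -/
noncomputable def eIntegral {S : Type*} [MeasurableSpace S]
    (μ : Measure S) (f : S → EReal) : EReal :=
  ((∫⁻ s, (f s).posENN ∂μ : ℝ≥0∞) : EReal) - ((∫⁻ s, (f s).negENN ∂μ : ℝ≥0∞) : EReal)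

/-- The integral of `f` w.r.t. `μ` is defined: at least one of `∫ f⁺ dμ`, `∫ f⁻ dμ` is finite. -/
def IntegralDefined {S : Type*} [MeasurableSpace S] (μ : Measure S) (f : S → EReal) : Prop :=
  (∫⁻ s, (f s).posENN ∂μ) ≠ ⊤ ∨ (∫⁻ s, (f s).negENN ∂μ) ≠ ⊤

/-- `{μ_n}` converges weakly to `μ`: integrals of bounded continuous functions converge. -/
def WeakConv {S : Type*} [MetricSpace S] [MeasurableSpace S]
    (μ : ℕ → Measure S) (ν : Measure S) : Prop :=
  ∀ g : BoundedContinuousFunction S ℝ,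
    Tendsto (fun n => ∫ s, g s ∂(μ n)) atTop (𝓝 (∫ s, g s ∂ν))

/-- The double lower limit `liminf_{n→∞, s'→s} f_n(s') =
`sup_{n, δ>0} inf_{k ≥ n, s' ∈ B_δ(s)} f_k(s')`. -/
noncomputable def dLiminf {S : Type*} [MetricSpace S] (f : ℕ → S → EReal) (s : S) : EReal :=
  ⨆ (n : ℕ) (δ : ℝ) (_ : 0 < δ),
    ⨅ (k : ℕ) (_ : n ≤ k) (s' : S) (_ : s' ∈ Metric.ball s δ), f k s'


/-- The double upper limit `limsup_{n→∞, s'→s} f_n(s')` =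
`inf_{n, δ>0} sup_{k ≥ n, s' ∈ B_δ(s)} f_k(s')`. -/
noncomputable def dLimsup {S : Type*} [MetricSpace S] (f : ℕ → S → EReal) (s : S) : EReal :=
  ⨅ (n : ℕ) (δ : ℝ) (_ : 0 < δ),
    ⨆ (k : ℕ) (_ : n ≤ k) (s' : S) (_ : s' ∈ Metric.ball s δ), f k s'


/-!
Write `f n = h n + g n` with `h n = f n - g n ≥ 0`. Pointwise, the double lower limit of `f` is
at most the double lower limit of `h` plus the double upper limit of `g`, so it suffices to prove
the Fatou inequality for the nonnegative `h`. The double lower limit of `h` is the increasing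
limit of the lower semicontinuous functions `s ↦ liminf_{k ≥ n, s' → s} h k s'`, each below
`h k` for `k ≥ n`. Weak convergence gives `ν G ≤ liminf μ_k G` for open `G`, and the layer-cake
formula turns this into `∫ ψ dν ≤ liminf ∫ ψ dμ_k` for lower semicontinuous `ψ ≥ 0`; monotone
convergence then handles `h`, and the hypothesis on the minorants handles `g`.
-/

open scoped BoundedContinuousFunction NNReal

namespace EReal

theorem posENN_eq_toENNReal (x : EReal) : x.posENN = x.toENNReal := by
  apply coe_ennreal_injective
  rw [coe_toENNReal_eq_max, posENN]
  rcases le_total x 0 with h | h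
  · simp [h]
  · rw [max_eq_left h, max_eq_right h]
    induction x with
    | coe a => rw [coe_abs, abs_of_nonneg (EReal.coe_nonneg.1 h)]
    | bot | top => simp_all

theorem negENN_eq_toENNReal_neg (x : EReal) : x.negENN = (-x).toENNReal :=
  posENN_eq_toENNReal (-x)

theorem toENNReal_coe_add_add_toENNReal_neg (a : ℝ≥0∞) (b : EReal) :
    ((a : EReal) + b).toENNReal + (-b).toENNReal
      = a + b.toENNReal + (-((a : EReal) + b)).toENNReal := by
  induction b with
  | bot => simp
  | top => simp [add_top_of_ne_bot (coe_ennreal_ne_bot a)]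
  | coe r =>
    induction a using ENNReal.recTopCoe with
    | top => simp
    | coe c =>
      rw [coe_nnreal_eq_coe_real, ← coe_add, ← coe_neg, ← coe_neg]
      simp only [real_coe_toENNReal]
      rw [← ENNReal.toReal_eq_toReal_iff' (by finiteness) (by finiteness)]
      simp only [ne_eq, ENNReal.ofReal_ne_top, not_false_eq_true, ENNReal.toReal_add,
        ENNReal.toReal_ofReal', neg_add_rev, ENNReal.add_eq_top, ENNReal.coe_ne_top, or_self,
        ENNReal.coe_toReal]
      have := c.coe_nonneg
      simp only [max_def]
      split_ifs <;> linarith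

-- The integrated form of the previous identity: `p, n` and `q, m` are the positive and negative
-- parts of the integrals of `a + b` and of `b`; the finite negative parts cancel.
theorem coe_ennreal_sub_eq_of_add_eq {p n a q m : ℝ≥0∞} (hn : n ≠ ⊤) (hm : m ≠ ⊤)
    (h : p + m = a + q + n) : (p : EReal) - n = a + ((q : EReal) - m) := by
  lift n to ℝ≥0 using hn
  lift m to ℝ≥0 using hm
  have h' := congrArg ((↑) : ℝ≥0∞ → EReal) h
  simp only [coe_ennreal_add, coe_nnreal_eq_coe_real] at h' ⊢
  calc (p : EReal) - (n : ℝ) = p + (m : ℝ) - (m : ℝ) - (n : ℝ) := by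
        rw [add_sub_cancel_right]
    _ = a + q + (n : ℝ) - (m : ℝ) - (n : ℝ) := by rw [h']
    _ = a + (q - (m : ℝ)) + (n : ℝ) - (n : ℝ) := by simp only [sub_eq_add_neg]; ac_rfl
    _ = a + (q - (m : ℝ)) := add_sub_cancel_right

theorem coe_toENNReal_sub_add_cancel {x : EReal} {r : ℝ} (h : (r : EReal) ≤ x) :
    ((x - r).toENNReal : EReal) + r = x := by
  rw [coe_toENNReal ((sub_nonneg (.inr (coe_ne_top r)) (.inr (coe_ne_bot r))).2 h),
    sub_add_cancel]

theorem coe_ennreal_liminf {ι : Type*} (F : Filter ι) [F.NeBot] (u : ι → ℝ≥0∞) :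
    ((liminf u F : ℝ≥0∞) : EReal) = liminf (fun i => (u i : EReal)) F :=
  coe_ennreal_strictMono.monotone.map_liminf_of_continuousAt u
    continuous_coe_ennreal_ereal.continuousAt

end EReal

section EIntegral

variable {S : Type*} [MeasurableSpace S] {μ : Measure S}

theorem eIntegral_eq (μ : Measure S) (f : S → EReal) :
    eIntegral μ f = ((∫⁻ s, (f s).toENNReal ∂μ : ℝ≥0∞) : EReal)
      - ((∫⁻ s, (-f s).toENNReal ∂μ : ℝ≥0∞) : EReal) := by
  simp only [eIntegral, EReal.posENN_eq_toENNReal, EReal.negENN_eq_toENNReal_neg]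

theorem eIntegral_mono_ae {f g : S → EReal} (h : f ≤ᵐ[μ] g) :
    eIntegral μ f ≤ eIntegral μ g := by
  rw [eIntegral_eq, eIntegral_eq]
  refine EReal.sub_le_sub (EReal.coe_ennreal_le_coe_ennreal_iff.2 ?_)
    (EReal.coe_ennreal_le_coe_ennreal_iff.2 ?_)
  · exact lintegral_mono_ae (h.mono fun s hs => EReal.toENNReal_le_toENNReal hs)
  · exact lintegral_mono_ae
      (h.mono fun s hs => EReal.toENNReal_le_toENNReal (EReal.neg_le_neg_iff.2 hs))

theorem eIntegral_eq_bot_iff {f : S → EReal} :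
    eIntegral μ f = ⊥ ↔ ∫⁻ s, (f s).negENN ∂μ = ⊤ := by
  simp [eIntegral, sub_eq_add_neg, EReal.add_eq_bot_iff]

theorem ae_ne_bot_of_lintegral_negENN_ne_top {f : S → EReal} (hf : Measurable f)
    (h : ∫⁻ s, (f s).negENN ∂μ ≠ ⊤) : ∀ᵐ s ∂μ, f s ≠ ⊥ := by
  simp only [EReal.negENN_eq_toENNReal_neg] at h
  filter_upwards [ae_lt_top hf.neg.ereal_toENNReal h] with s hs hbot
  simp [hbot] at hs

theorem eIntegral_coe_add {U : S → ℝ≥0∞} {G : S → EReal} (hU : Measurable U)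
    (hG : Measurable G) (hG_neg : ∫⁻ s, (G s).negENN ∂μ ≠ ⊤) :
    eIntegral μ (fun s => (U s : EReal) + G s) = (∫⁻ s, U s ∂μ : ℝ≥0∞) + eIntegral μ G := by
  simp only [eIntegral_eq, EReal.negENN_eq_toENNReal_neg] at hG_neg ⊢
  have hsum : Measurable fun s => (U s : EReal) + G s := hU.coe_ereal_ennreal.add hG
  have h_neg_le :
      ∫⁻ s, (-((U s : EReal) + G s)).toENNReal ∂μ ≤ ∫⁻ s, (-G s).toENNReal ∂μ :=
    lintegral_mono fun s => EReal.toENNReal_le_toENNReal <| EReal.neg_le_neg_iff.2 <|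
      le_add_of_nonneg_left (EReal.coe_ennreal_nonneg _)
  refine EReal.coe_ennreal_sub_eq_of_add_eq (ne_top_of_le_ne_top hG_neg h_neg_le) hG_neg ?_
  rw [← lintegral_add_left hsum.ereal_toENNReal, ← lintegral_add_left hU,
    ← lintegral_add_left (f := fun s => U s + (G s).toENNReal) (hU.add hG.ereal_toENNReal)]
  exact lintegral_congr fun s => EReal.toENNReal_coe_add_add_toENNReal_neg (U s) (G s)

theorem coe_lintegral_add_eIntegral_le {U : S → ℝ≥0∞} {G : S → EReal} (hU : Measurable U)
    (hG : Measurable G) :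
    ((∫⁻ s, U s ∂μ : ℝ≥0∞) : EReal) + eIntegral μ G
      ≤ eIntegral μ (fun s => (U s : EReal) + G s) := by
  by_cases hG_neg : ∫⁻ s, (G s).negENN ∂μ = ⊤
  · rw [eIntegral_eq_bot_iff.2 hG_neg, EReal.add_bot]
    exact bot_le
  · exact (eIntegral_coe_add hU hG hG_neg).ge

end EIntegral

section LimitsAlongProd

variable {ι X α : Type*} [CompleteLinearOrder α] [DenselyOrdered α]

theorem lowerSemicontinuous_liminf_prod_nhds [TopologicalSpace X] (l : Filter ι)
    (u : ι × X → α) : LowerSemicontinuous fun x => liminf u (l ×ˢ 𝓝 x) := by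
  intro x y hy
  obtain ⟨c, hyc, hc⟩ := exists_between hy
  obtain ⟨pa, hpa, pb, hpb, hp⟩ := eventually_prod_iff.1 (eventually_lt_of_lt_liminf hc)
  filter_upwards [hpb.eventually_nhds] with x' hx'
  exact hyc.trans_le <| le_liminf_of_le (by isBoundedDefault) <|
    eventually_prod_iff.2 ⟨pa, hpa, pb, hx', fun {_} ha {_} hb => (hp ha hb).le⟩

theorem upperSemicontinuous_limsup_prod_nhds [TopologicalSpace X] (l : Filter ι)
    (u : ι × X → α) : UpperSemicontinuous fun x => limsup u (l ×ˢ 𝓝 x) :=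
  lowerSemicontinuous_liminf_prod_nhds (α := αᵒᵈ) l u

theorem liminf_atTop_prod_le_iSup_liminf_Ici_prod (l : Filter X) (u : ℕ × X → α) :
    liminf u (atTop ×ˢ l) ≤ ⨆ n, liminf u (𝓟 (Set.Ici n) ×ˢ l) := by
  refine le_of_forall_lt fun y hy => ?_
  obtain ⟨c, hyc, hc⟩ := exists_between hy
  obtain ⟨pa, hpa, pb, hpb, hp⟩ := eventually_prod_iff.1 (eventually_lt_of_lt_liminf hc)
  obtain ⟨n, hn⟩ := eventually_atTop.1 hpa
  refine lt_of_lt_of_le ?_ (le_iSup (fun n => liminf u (𝓟 (Set.Ici n) ×ˢ l)) n)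
  refine hyc.trans_le (le_liminf_of_le (by isBoundedDefault) ?_)
  exact eventually_prod_iff.2
    ⟨pa, eventually_principal.2 hn, pb, hpb, fun {_} ha {_} hb => (hp ha hb).le⟩

end LimitsAlongProd

section DoubleLimits

variable {S : Type*} [MetricSpace S]

theorem dLiminf_eq_liminf (f : ℕ → S → EReal) (s : S) :
    dLiminf f s = liminf (Function.uncurry f) (atTop ×ˢ 𝓝 s) := by
  rw [(atTop_basis.prod nhds_basis_ball).liminf_eq_iSup_iInf, dLiminf]
  simp only [iSup_prod, iInf_prod, iInf_and, Set.mem_prod, Set.mem_Ici, mem_ball, true_and]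
  exact iSup_congr fun n => iSup_congr fun δ => iSup_congr fun _ => iInf_congr fun k => iInf_comm

theorem dLimsup_eq_limsup (f : ℕ → S → EReal) (s : S) :
    dLimsup f s = limsup (Function.uncurry f) (atTop ×ˢ 𝓝 s) := by
  rw [(atTop_basis.prod nhds_basis_ball).limsup_eq_iInf_iSup, dLimsup]
  simp only [iInf_prod, iSup_prod, iSup_and, Set.mem_prod, Set.mem_Ici, mem_ball, true_and]
  exact iInf_congr fun n => iInf_congr fun δ => iInf_congr fun _ => iSup_congr fun k => iSup_comm

theorem measurable_dLimsup [MeasurableSpace S] [OpensMeasurableSpace S] (f : ℕ → S → EReal) :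
    Measurable (dLimsup f) := by
  simp_rw [funext (dLimsup_eq_limsup f)]
  exact (upperSemicontinuous_limsup_prod_nhds _ _).measurable

theorem dLiminf_coe_add_le (H : ℕ → S → ℝ≥0∞) (g : ℕ → S → EReal) {s : S}
    (hg : dLimsup g s ≠ ⊥) :
    dLiminf (fun n s => (H n s : EReal) + g n s) s
      ≤ ((liminf (Function.uncurry H) (atTop ×ˢ 𝓝 s) : ℝ≥0∞) : EReal) + dLimsup g s := by
  rw [dLiminf_eq_liminf, dLimsup_eq_limsup] at *
  rw [EReal.coe_ennreal_liminf, add_comm]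
  have h_sum : Function.uncurry (fun n s => (H n s : EReal) + g n s)
      = Function.uncurry g + fun p => ((Function.uncurry H p : ℝ≥0∞) : EReal) :=
    funext fun p => add_comm _ _
  rw [h_sum]
  refine EReal.liminf_add_le (.inl hg) (.inr (ne_bot_of_le_ne_bot EReal.zero_ne_bot ?_))
  exact le_liminf_of_le (by isBoundedDefault) (.of_forall fun p => EReal.coe_ennreal_nonneg _)

end DoubleLimits

section LowerSemicontinuousFatou

variable {X : Type*} [TopologicalSpace X] [MeasurableSpace X] [OpensMeasurableSpace X]
  {ν : Measure X} {μs : ℕ → Measure X}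

theorem lintegral_ofReal_le_liminf_lintegral_of_lowerSemicontinuous
    (h_open : ∀ G, IsOpen G → ν G ≤ liminf (fun k => μs k G) atTop)
    {f : X → ℝ} (hf : LowerSemicontinuous f) (hf_nn : 0 ≤ f) :
    ∫⁻ x, ENNReal.ofReal (f x) ∂ν
      ≤ liminf (fun k => ∫⁻ x, ENNReal.ofReal (f x) ∂μs k) atTop := by
  simp_rw [lintegral_eq_lintegral_meas_lt _ (.of_forall hf_nn) hf.measurable.aemeasurable]
  calc ∫⁻ t in Set.Ioi 0, ν {x | t < f x}
      ≤ ∫⁻ t in Set.Ioi 0, liminf (fun k => μs k {x | t < f x}) atTop :=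
        lintegral_mono fun t => h_open _ (hf.isOpen_preimage t)
    _ ≤ liminf (fun k => ∫⁻ t in Set.Ioi 0, μs k {x | t < f x}) atTop :=
        lintegral_liminf_le fun k => Antitone.measurable fun _ _ hst =>
          measure_mono fun _ hx => hst.trans_lt hx

theorem lintegral_le_liminf_lintegral_of_lowerSemicontinuous
    (h_open : ∀ G, IsOpen G → ν G ≤ liminf (fun k => μs k G) atTop)
    {ψ : X → ℝ≥0∞} (hψ : LowerSemicontinuous ψ) :
    ∫⁻ x, ψ x ∂ν ≤ liminf (fun k => ∫⁻ x, ψ x ∂μs k) atTop := by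
  have h_trunc (M : ℕ) (y : ℝ≥0∞) :
      ENNReal.ofReal ((M : ℝ≥0∞).truncateToReal y) = min (M : ℝ≥0∞) y :=
    ENNReal.ofReal_toReal (ne_top_of_le_ne_top (ENNReal.natCast_ne_top M) (min_le_left _ _))
  have h_sup (x : X) : ⨆ M : ℕ, min (M : ℝ≥0∞) (ψ x) = ψ x := by
    rw [← iSup_inf_eq, ENNReal.iSup_natCast, top_inf_eq]
  calc ∫⁻ x, ψ x ∂ν = ∫⁻ x, ⨆ M : ℕ, min (M : ℝ≥0∞) (ψ x) ∂ν :=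
        lintegral_congr fun x => (h_sup x).symm
    _ = ⨆ M : ℕ, ∫⁻ x, min (M : ℝ≥0∞) (ψ x) ∂ν :=
        lintegral_iSup (fun M => measurable_const.min hψ.measurable)
          fun _ _ h x => min_le_min_right _ (Nat.cast_le.2 h)
    _ ≤ liminf (fun k => ∫⁻ x, ψ x ∂μs k) atTop := iSup_le fun M => by
        have hM : (M : ℝ≥0∞) ≠ ⊤ := ENNReal.natCast_ne_top M
        have h_fatou := lintegral_ofReal_le_liminf_lintegral_of_lowerSemicontinuous h_open
          ((ENNReal.continuous_truncateToReal hM).comp_lowerSemicontinuous hψ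
            (ENNReal.monotone_truncateToReal hM)) fun _ => ENNReal.toReal_nonneg
        simp only [Function.comp_apply, h_trunc] at h_fatou
        exact h_fatou.trans <| liminf_le_liminf <| .of_forall fun k =>
          lintegral_mono fun x => min_le_right _ _

theorem lintegral_liminf_prod_nhds_le_liminf_lintegral
    (h_open : ∀ G, IsOpen G → ν G ≤ liminf (fun k => μs k G) atTop) (H : ℕ → X → ℝ≥0∞) :
    ∫⁻ x, liminf (Function.uncurry H) (atTop ×ˢ 𝓝 x) ∂ν
      ≤ liminf (fun k => ∫⁻ x, H k x ∂μs k) atTop := by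
  set Ψ : ℕ → X → ℝ≥0∞ := fun n x => liminf (Function.uncurry H) (𝓟 (Set.Ici n) ×ˢ 𝓝 x)
  have hΨ_lsc (n : ℕ) : LowerSemicontinuous (Ψ n) := lowerSemicontinuous_liminf_prod_nhds _ _
  have hΨ_mono : Monotone Ψ := fun m n hmn x =>
    liminf_le_liminf_of_le (prod_mono (principal_mono.2 (Set.Ici_subset_Ici.2 hmn)) le_rfl)
  have hΨ_le {n k : ℕ} (hnk : n ≤ k) (x : X) : Ψ n x ≤ H k x := by
    have h_pure : pure (k, x) ≤ 𝓟 (Set.Ici n) ×ˢ 𝓝 x := by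
      rw [← prod_pure_pure]
      exact prod_mono ((pure_le_principal k).2 hnk) (pure_le_nhds x)
    exact liminf_le_of_le (by isBoundedDefault) fun b hb =>
      eventually_pure.1 (hb.filter_mono h_pure)
  calc ∫⁻ x, liminf (Function.uncurry H) (atTop ×ˢ 𝓝 x) ∂ν ≤ ∫⁻ x, ⨆ n, Ψ n x ∂ν :=
        lintegral_mono fun x => liminf_atTop_prod_le_iSup_liminf_Ici_prod _ _
    _ = ⨆ n, ∫⁻ x, Ψ n x ∂ν := lintegral_iSup (fun n => (hΨ_lsc n).measurable) hΨ_mono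
    _ ≤ liminf (fun k => ∫⁻ x, H k x ∂μs k) atTop := iSup_le fun n =>
        (lintegral_le_liminf_lintegral_of_lowerSemicontinuous h_open (hΨ_lsc n)).trans <|
          liminf_le_liminf <| eventually_atTop.2 ⟨n, fun k hk => lintegral_mono (hΨ_le hk)⟩

end LowerSemicontinuousFatou

theorem ofReal_integral_le_measure_of_le_indicator {S : Type*} [TopologicalSpace S]
    [MeasurableSpace S] (μ : Measure S) {G : Set S} (hG : MeasurableSet G) (F : S →ᵇ ℝ≥0)
    (hF : ∀ x, (F x : ℝ≥0∞) ≤ G.indicator 1 x) :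
    ENNReal.ofReal (∫ x, (F x : ℝ) ∂μ) ≤ μ G := by
  by_cases hi : Integrable (fun x => (F x : ℝ)) μ
  · rw [ofReal_integral_eq_lintegral_ofReal hi (ae_of_all _ fun x => (F x).coe_nonneg)]
    simp_rw [ENNReal.ofReal_coe_nnreal]
    exact (lintegral_mono hF).trans_eq (lintegral_indicator_one hG)
  · simp [integral_undef hi]

namespace WeakConv

variable {S : Type*} [MetricSpace S] [MeasurableSpace S] [BorelSpace S]
  {μ : ℕ → Measure S} {ν : Measure S} [IsFiniteMeasure ν]

theorem lintegral_le_liminf_measure (hw : WeakConv μ ν) {G : Set S} (hG : MeasurableSet G)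
    (F : S →ᵇ ℝ≥0) (hF : ∀ x, (F x : ℝ≥0∞) ≤ G.indicator 1 x) :
    ∫⁻ x, F x ∂ν ≤ liminf (fun k => μ k G) atTop := by
  have hlim : Tendsto (fun k => ENNReal.ofReal (∫ x, (F x : ℝ) ∂μ k)) atTop
      (𝓝 (ENNReal.ofReal (∫ x, (F x : ℝ) ∂ν))) :=
    (ENNReal.continuous_ofReal.tendsto _).comp (hw (F.comp _ NNReal.isometry_coe.lipschitz))
  rw [← ENNReal.ofReal_toReal (F.lintegral_lt_top_of_nnreal ν).ne,
    F.toReal_lintegral_coe_eq_integral, ← hlim.liminf_eq]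
  exact liminf_le_liminf (.of_forall fun k =>
    ofReal_integral_le_measure_of_le_indicator (μ k) hG F hF)

theorem measure_le_liminf_of_isOpen (hw : WeakConv μ ν) {G : Set S} (hG : IsOpen G) :
    ν G ≤ liminf (fun k => μ k G) atTop := by
  have hδ (n : ℕ) : (0 : ℝ) < 1 / (n + 1) := Nat.one_div_pos_of_nat
  let F (n : ℕ) : S →ᵇ ℝ≥0 := 1 - thickenedIndicator (hδ n) Gᶜ
  have hF_apply (n : ℕ) (x : S) : F n x = 1 - thickenedIndicator (hδ n) Gᶜ x := rfl
  have hF (n : ℕ) (x : S) : (F n x : ℝ≥0∞) ≤ G.indicator 1 x := by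
    by_cases hx : x ∈ G
    · simp [hF_apply, hx]
    · rw [hF_apply, thickenedIndicator_one (hδ n) Gᶜ hx, tsub_self]
      simp
  have hF_lim : Tendsto (fun n x => F n x) atTop (𝓝 (G.indicator 1)) := by
    have h_thick := thickenedIndicator_tendsto_indicator_closure hδ
      tendsto_one_div_add_atTop_nhds_zero_nat Gᶜ
    rw [hG.isClosed_compl.closure_eq] at h_thick
    refine tendsto_pi_nhds.2 fun x => ?_
    have h_ind : G.indicator 1 x = 1 - Gᶜ.indicator (fun _ => (1 : ℝ≥0)) x := by
      by_cases hx : x ∈ G <;> simp [hx]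
    rw [h_ind]
    exact tendsto_const_nhds.sub (tendsto_pi_nhds.1 h_thick x)
  exact le_of_tendsto' (measure_of_cont_bdd_of_tendsto_indicator ν hG.measurableSet F
    (fun n x => tsub_le_self) hF_lim) fun n =>
      hw.lintegral_le_liminf_measure hG.measurableSet _ (hF n)

end WeakConv

theorem fatou_weak_minorant_general {S : Type*} [MetricSpace S] [MeasurableSpace S] [BorelSpace S]
    (μ : ℕ → Measure S) (ν : Measure S) [IsFiniteMeasure ν] (hw : WeakConv μ ν)
    (f : ℕ → S → EReal) (hf : ∀ n, Measurable (f n))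
    (g : ℕ → S → ℝ) (hg : ∀ n, Measurable (g n))
    (hfg : ∀ n s, ((g n s : ℝ) : EReal) ≤ f n s)
    (hgbd : (⊥ : EReal) < eIntegral ν (fun s => dLimsup (fun n s' => ((g n s' : ℝ) : EReal)) s))
    (hgle : eIntegral ν (fun s => dLimsup (fun n s' => ((g n s' : ℝ) : EReal)) s)
      ≤ liminf (fun n => eIntegral (μ n) (fun s => ((g n s : ℝ) : EReal))) atTop) :
    eIntegral ν (fun s => dLiminf f s) ≤ liminf (fun n => eIntegral (μ n) (f n)) atTop := by
  set gE : ℕ → S → EReal := fun n s => (g n s : EReal)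
  set H : ℕ → S → ℝ≥0∞ := fun n s => (f n s - gE n s).toENNReal
  have hf_eq : f = fun n s => (H n s : EReal) + gE n s := by
    ext n s
    exact (EReal.coe_toENNReal_sub_add_cancel (hfg n s)).symm
  have hgE_neg : ∫⁻ s, (dLimsup gE s).negENN ∂ν ≠ ⊤ :=
    fun h => hgbd.ne' (eIntegral_eq_bot_iff.2 h)
  calc eIntegral ν (fun s => dLiminf f s)
      ≤ eIntegral ν (fun s => ((liminf (Function.uncurry H) (atTop ×ˢ 𝓝 s) : ℝ≥0∞) : EReal)
          + dLimsup gE s) := by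
        refine eIntegral_mono_ae ?_
        filter_upwards [ae_ne_bot_of_lintegral_negENN_ne_top (measurable_dLimsup gE) hgE_neg]
          with s hs
        exact (congrArg (dLiminf · s) hf_eq).trans_le (dLiminf_coe_add_le H gE hs)
    _ = ((∫⁻ s, liminf (Function.uncurry H) (atTop ×ˢ 𝓝 s) ∂ν : ℝ≥0∞) : EReal)
          + eIntegral ν (dLimsup gE) :=
        eIntegral_coe_add (lowerSemicontinuous_liminf_prod_nhds _ _).measurable
          (measurable_dLimsup gE) hgE_neg
    _ ≤ liminf (fun k => ((∫⁻ s, H k s ∂μ k : ℝ≥0∞) : EReal)) atTop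
          + liminf (fun k => eIntegral (μ k) (gE k)) atTop := by
        gcongr
        rw [← EReal.coe_ennreal_liminf, EReal.coe_ennreal_le_coe_ennreal_iff]
        exact lintegral_liminf_prod_nhds_le_liminf_lintegral
          (fun G hG => hw.measure_le_liminf_of_isOpen hG) H
    _ ≤ liminf (fun k => ((∫⁻ s, H k s ∂μ k : ℝ≥0∞) : EReal) + eIntegral (μ k) (gE k)) atTop :=
        EReal.le_liminf_add
    _ ≤ liminf (fun k => eIntegral (μ k) (f k)) atTop := by
        rw [hf_eq]
        exact liminf_le_liminf <| .of_forall fun k => coe_lintegral_add_eIntegral_le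
          ((hf k).sub (hg k).coe_real_ereal).ereal_toENNReal (hg k).coe_real_ereal

/-- Fatou's lemma for weakly converging measures with minorants
(Feinberg–Kasyanov–Liang, Theorem 2.4(ii) / Corollary 2.7). -/
theorem fatou_weak_minorant {S : Type*} [MetricSpace S] [MeasurableSpace S] [BorelSpace S]
    (μ : ℕ → Measure S) (ν : Measure S) [IsFiniteMeasure ν] (hw : WeakConv μ ν)
    (f : ℕ → S → EReal) (hf : ∀ n, Measurable (f n))
    (g : ℕ → S → ℝ) (hg : ∀ n, Measurable (g n))
    (hfg : ∀ n s, ((g n s : ℝ) : EReal) ≤ f n s)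
    (hgbd : (⊥ : EReal) < eIntegral ν (fun s => dLimsup (fun n s' => ((g n s' : ℝ) : EReal)) s))
    (hgle : eIntegral ν (fun s => dLimsup (fun n s' => ((g n s' : ℝ) : EReal)) s)
      ≤ liminf (fun n => eIntegral (μ n) (fun s => ((g n s : ℝ) : EReal))) atTop)
    (hdef : ∀ n, IntegralDefined (μ n) (f n))
    (hdef' : IntegralDefined ν (fun s => dLiminf f s))
    (hdefg : ∀ n, IntegralDefined (μ n) (fun s => ((g n s : ℝ) : EReal)))
    (hdefg' : IntegralDefined ν (fun s => dLimsup (fun n s' => ((g n s' : ℝ) : EReal)) s)) :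
    eIntegral ν (fun s => dLiminf f s) ≤ liminf (fun n => eIntegral (μ n) (f n)) atTop :=
  fatou_weak_minorant_general μ ν hw f hf g hg hfg hgbd hgle
end

section
/- Let {f_n} be a sequence of real-valued functions on a metric space S, let s ∈ S, and suppose the sequence {f_n(s)} converges. Then the sequence {f_n} is equicontinuous at s if and only if each function f_n is continuous at s and lim_{n→∞, s'→s} f_n(s') = lim_{n→∞} f_n(s) (in particular the double limit exists). -/
open Filter Metric Topology

/-- The sequence `{f_n}` is lower semi-equicontinuous at `s`. -/
def LowerSemiEquicontinuousAt {S : Type*} [MetricSpace S] (f : ℕ → S → ℝ) (s : S) : Prop :=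
  ∀ ε : ℝ, 0 < ε → ∃ δ : ℝ, 0 < δ ∧ ∀ n : ℕ, ∀ s' ∈ Metric.ball s δ, f n s - ε < f n s'

/-- The sequence `{f_n}` is equicontinuous at `s`: it is both lower and upper
semi-equicontinuous at `s`. -/
def SeqEquicontinuousAt {S : Type*} [MetricSpace S] (f : ℕ → S → ℝ) (s : S) : Prop :=
  LowerSemiEquicontinuousAt f s ∧ LowerSemiEquicontinuousAt (fun n s' => -(f n s')) s

/-! Equicontinuity splits into a lower and an upper half, and the upper half of `f` is the lower
half of `-f`, just as `dLimsup f = -dLiminf (-f)`. Taking `s' = s` shows that always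
`dLiminf ≤ lim f_n(s)`, and the lower half is equivalent to lower semicontinuity of every `f_n`
at `s` together with `lim f_n(s) ≤ dLiminf`: for all large `n` the uniform bound comes from the
double limit and the convergence of `f_n(s)`, for the finitely many remaining `n` from their
individual semicontinuity. -/

theorem EReal.neg_iSup {ι : Sort*} (x : ι → EReal) : -(⨆ i, x i) = ⨅ i, -x i :=
  EReal.negOrderIso.map_iSup x

theorem EReal.neg_iInf {ι : Sort*} (x : ι → EReal) : -(⨅ i, x i) = ⨆ i, -x i :=
  EReal.negOrderIso.map_iInf x

theorem lowerSemicontinuousAt_neg_iff {α γ : Type*} [TopologicalSpace α] [AddCommGroup γ]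
    [PartialOrder γ] [IsOrderedAddMonoid γ] {g : α → γ} {x : α} :
    LowerSemicontinuousAt (fun x' => -g x') x ↔ UpperSemicontinuousAt g x := by
  rw [lowerSemicontinuousAt_iff, upperSemicontinuousAt_iff]
  refine ⟨fun h y hy => ?_, fun h y hy => ?_⟩
  · simpa using h (-y) (neg_lt_neg hy)
  · simpa [lt_neg] using h (-y) (lt_neg.1 hy)

section DoubleLimits

variable {S : Type*} [MetricSpace S] (f : ℕ → S → EReal) (s : S)

theorem dLimsup_eq_neg_dLiminf_neg : dLimsup f s = -dLiminf (fun n s' => -f n s') s := by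
  simp only [dLimsup, dLiminf, EReal.neg_iSup, EReal.neg_iInf, neg_neg]

theorem dLiminf_le_liminf : dLiminf f s ≤ liminf (fun n => f n s) atTop := by
  rw [liminf_eq_iSup_iInf_of_nat]
  refine iSup_mono fun n => iSup₂_le fun δ hδ => le_iInf₂ fun k hk => ?_
  exact iInf₂_le_of_le k hk (iInf₂_le s (mem_ball_self hδ))

variable {f s}

theorem le_dLiminf_of_eventually {y : EReal} {N : ℕ}
    (h : ∀ᶠ s' in 𝓝 s, ∀ k ≥ N, y ≤ f k s') : y ≤ dLiminf f s := by
  obtain ⟨δ, hδ, hball⟩ := eventually_nhds_iff_ball.1 h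
  exact le_iSup₂_of_le N δ <| le_iSup_of_le hδ <|
    le_iInf₂ fun k hk => le_iInf₂ fun s' hs' => hball s' hs' k hk

theorem exists_eventually_lt_of_lt_dLiminf {y : EReal} (h : y < dLiminf f s) :
    ∃ N, ∀ᶠ s' in 𝓝 s, ∀ k ≥ N, y < f k s' := by
  simp only [dLiminf, lt_iSup_iff] at h
  obtain ⟨N, δ, hδ, hy⟩ := h
  exact ⟨N, eventually_nhds_iff_ball.2 ⟨δ, hδ, fun s' hs' k hk =>
    hy.trans_le (iInf₂_le_of_le k hk (iInf₂_le s' hs'))⟩⟩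

end DoubleLimits

section RealValued

variable {S : Type*} [MetricSpace S] {f : ℕ → S → ℝ} {s : S} {L : ℝ}

theorem lowerSemiEquicontinuousAt_iff_eventually :
    LowerSemiEquicontinuousAt f s ↔
      ∀ ε > 0, ∀ᶠ s' in 𝓝 s, ∀ n, f n s - ε < f n s' := by
  simp only [LowerSemiEquicontinuousAt, eventually_nhds_iff_ball]
  exact forall₂_congr fun _ _ => exists_congr fun _ => and_congr_right fun _ =>
    ⟨fun h s' hs' n => h n s' hs', fun h n s' hs' => h s' hs' n⟩

theorem dLiminf_le_of_tendsto (hL : Tendsto (fun n => f n s) atTop (𝓝 L)) :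
    dLiminf (fun n s' => (f n s' : EReal)) s ≤ L :=
  (dLiminf_le_liminf _ s).trans_eq (EReal.tendsto_coe.2 hL).liminf_eq

theorem LowerSemiEquicontinuousAt.lowerSemicontinuousAt (h : LowerSemiEquicontinuousAt f s)
    (n : ℕ) : LowerSemicontinuousAt (f n) s := fun y hy =>
  (lowerSemiEquicontinuousAt_iff_eventually.1 h _ (sub_pos.2 hy)).mono fun s' hs' => by
    simpa using hs' n

theorem LowerSemiEquicontinuousAt.le_dLiminf (h : LowerSemiEquicontinuousAt f s)
    (hL : Tendsto (fun n => f n s) atTop (𝓝 L)) :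
    (L : EReal) ≤ dLiminf (fun n s' => (f n s' : EReal)) s := by
  refine EReal.ge_of_forall_gt_iff_ge.1 fun y hy => ?_
  have hε : 0 < (L - y) / 2 := by
    have : y < L := by exact_mod_cast hy
    linarith
  obtain ⟨N, hN⟩ := eventually_atTop.1 (hL.eventually (lt_mem_nhds (sub_lt_self L hε)))
  refine le_dLiminf_of_eventually (N := N) <|
    (lowerSemiEquicontinuousAt_iff_eventually.1 h _ hε).mono fun s' hs' k hk => ?_
  have hks := hN k hk
  have hks' := hs' k
  exact_mod_cast (by linarith : y ≤ f k s')

theorem lowerSemiEquicontinuousAt_of_le_dLiminf (hL : Tendsto (fun n => f n s) atTop (𝓝 L))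
    (hlsc : ∀ n, LowerSemicontinuousAt (f n) s)
    (hle : (L : EReal) ≤ dLiminf (fun n s' => (f n s' : EReal)) s) :
    LowerSemiEquicontinuousAt f s := by
  refine lowerSemiEquicontinuousAt_iff_eventually.2 fun ε hε => ?_
  have hlt : ((L - ε / 2 : ℝ) : EReal) < dLiminf (fun n s' => (f n s' : EReal)) s :=
    lt_of_lt_of_le (EReal.coe_lt_coe_iff.2 (by linarith)) hle
  obtain ⟨N, hN⟩ := exists_eventually_lt_of_lt_dLiminf hlt
  obtain ⟨M, hM⟩ := eventually_atTop.1
    (hL.eventually (gt_mem_nhds (lt_add_of_pos_right L (half_pos hε))))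
  have hfinite : ∀ᶠ s' in 𝓝 s, ∀ k ∈ {k | k < max N M}, f k s - ε < f k s' :=
    (Set.finite_lt_nat _).eventually_all.2 fun k _ => hlsc k _ (sub_lt_self _ hε)
  filter_upwards [hfinite, hN] with s' hsmall hlarge k
  rcases lt_or_ge k (max N M) with hk | hk
  · exact hsmall k hk
  · have hks := hM k (le_of_max_le_right hk)
    have hks' : L - ε / 2 < f k s' := by exact_mod_cast hlarge k (le_of_max_le_left hk)
    linarith

theorem lowerSemiEquicontinuousAt_iff (hL : Tendsto (fun n => f n s) atTop (𝓝 L)) :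
    LowerSemiEquicontinuousAt f s ↔ (∀ n, LowerSemicontinuousAt (f n) s) ∧
      (L : EReal) ≤ dLiminf (fun n s' => (f n s' : EReal)) s :=
  ⟨fun h => ⟨h.lowerSemicontinuousAt, h.le_dLiminf hL⟩,
    fun h => lowerSemiEquicontinuousAt_of_le_dLiminf hL h.1 h.2⟩

theorem dLiminf_eq_iff (hL : Tendsto (fun n => f n s) atTop (𝓝 L)) :
    dLiminf (fun n s' => (f n s' : EReal)) s = L ↔
      (L : EReal) ≤ dLiminf (fun n s' => (f n s' : EReal)) s :=
  le_antisymm_iff.trans (and_iff_right (dLiminf_le_of_tendsto hL))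

theorem dLimsup_eq_iff (hL : Tendsto (fun n => f n s) atTop (𝓝 L)) :
    dLimsup (fun n s' => (f n s' : EReal)) s = L ↔
      ((-L : ℝ) : EReal) ≤ dLiminf (fun n s' => ((-f n s' : ℝ) : EReal)) s := by
  simp only [dLimsup_eq_neg_dLiminf_neg, ← EReal.coe_neg, neg_eq_iff_eq_neg]
  exact dLiminf_eq_iff (f := fun n s' => -f n s') hL.neg

end RealValued

/-- Corollary 3.1: if `{f_n(s)}` converges, then `{f_n}` is equicontinuous at `s` iff each
`f_n` is continuous at `s` and the double limit over `n → ∞, s' → s` exists and equals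
`lim_n f_n(s)`. -/
theorem seqEquicontinuousAt_iff {S : Type*} [MetricSpace S]
    (f : ℕ → S → ℝ) (s : S) (L : ℝ) (hL : Tendsto (fun n => f n s) atTop (𝓝 L)) :
    SeqEquicontinuousAt f s ↔
      ((∀ n, ContinuousAt (f n) s) ∧
        dLiminf (fun n s' => ((f n s' : ℝ) : EReal)) s = (L : EReal) ∧
        dLimsup (fun n s' => ((f n s' : ℝ) : EReal)) s = (L : EReal)) := by
  rw [SeqEquicontinuousAt, lowerSemiEquicontinuousAt_iff hL,
    lowerSemiEquicontinuousAt_iff (f := fun n s' => -f n s') hL.neg, dLiminf_eq_iff hL,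
    dLimsup_eq_iff hL]
  simp only [continuousAt_iff_lower_upperSemicontinuousAt, lowerSemicontinuousAt_neg_iff,
    forall_and]
  tauto
end
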